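/- arXiv:1405.3920 — 2 statements merged into one kernel-verified Lean document; each statement's English description precedes it below -/
import Mathlib

section
/- If X is a random variable with continuous strictly increasing CDF F, and M ⊆ ℝ is a Borel set with P(X ∈ M) > 0, then conditional on {X ∈ M}, the statistic T = P(X ≥ x, X ∈ M)/P(X ∈ M) evaluated at x = X is uniformly distributed on [0,1]. -/
open MeasureTheory ProbabilityTheory Set Filter Topology

/-!
Push the problem forward by `X`: conditioning `P` on `X ∈ M` and then mapping by `X` gives the
law `ν` of `X` conditioned on `M`, and the statistic is `x ↦ ν [x, ∞)`. A continuous CDF means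
that the law of `X` has no atoms, hence neither has `ν`, and then `G x = ν [x, ∞) = 1 - F_ν x` is
continuous and antitone, running from `1` down to `0`. For `0 < t < 1` the set `{G ≤ t}` is a ray
`[b, ∞)` with `G b = t`, so `ν {G ≤ t} = t`: the image of `ν` under `G` is uniform on `[0, 1]`.
-/

theorem Antitone.exists_setOf_le_eq_Ici {g : ℝ → ℝ} (hanti : Antitone g) (hg : Continuous g)
    {v : ℝ} (hle : ∃ x, g x ≤ v) (hlt : ∃ x, v < g x) :
    ∃ b, {x | g x ≤ v} = Ici b ∧ g b = v := by
  set S := {x | g x ≤ v}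
  obtain ⟨x₀, hx₀⟩ := hlt
  have hbdd : BddBelow S :=
    ⟨x₀, fun x hx => le_of_not_gt fun hxx₀ => (hx₀.trans_le (hanti hxx₀.le)).not_ge hx⟩
  have hb : sInf S ∈ S := (isClosed_le hg continuous_const).csInf_mem hle hbdd
  refine ⟨sInf S, Subset.antisymm (fun x hx => csInf_le hbdd hx)
    (fun x hx => (hanti hx).trans hb), le_antisymm hb ?_⟩
  have hleft : ∀ x ∈ Iio (sInf S), v ≤ g x := fun x hx =>
    (not_le.1 (show x ∉ S from notMem_of_lt_csInf hx hbdd)).le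
  have htend : Tendsto g (𝓝[<] sInf S) (𝓝 (g (sInf S))) :=
    (hg.tendsto _).mono_left nhdsWithin_le_nhds
  exact _root_.ge_of_tendsto htend (eventually_nhdsWithin_of_forall hleft)

theorem Real.volume_restrict_Icc_Iic (a b t : ℝ) :
    volume.restrict (Icc a b) (Iic t) = ENNReal.ofReal (min t b - a) := by
  have hinter : Iic t ∩ Icc a b = Icc a (min t b) := by
    ext x
    simp only [mem_inter_iff, mem_Iic, mem_Icc, le_min_iff]
    tauto
  rw [Measure.restrict_apply measurableSet_Iic, hinter, Real.volume_Icc]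

namespace ProbabilityTheory

instance cond.instNullSingletonClass {Ω : Type*} [MeasurableSpace Ω] {μ : Measure Ω}
    [NullSingletonClass μ] (s : Set Ω) : NullSingletonClass μ[|s] :=
  ⟨fun x => by simp [cond]⟩

theorem map_cond_preimage {Ω α : Type*} [MeasurableSpace Ω] [MeasurableSpace α] {μ : Measure Ω}
    {X : Ω → α} (hX : Measurable X) {s : Set α} (hs : MeasurableSet s) :
    (μ[|X ⁻¹' s]).map X = (μ.map X)[|s] := by
  ext t ht
  rw [Measure.map_apply hX ht, cond_apply (hX hs), cond_apply hs, Measure.map_apply hX hs,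
    Measure.map_apply hX (hs.inter ht), preimage_inter]

variable {μ : Measure ℝ} [IsProbabilityMeasure μ]

theorem continuous_cdf_iff : Continuous (cdf μ) ↔ NullSingletonClass μ := by
  have hsingleton (x : ℝ) : μ {x} = ENNReal.ofReal (cdf μ x - Function.leftLim (cdf μ) x) := by
    rw [← (cdf μ).measure_singleton, measure_cdf]
  constructor
  · intro h
    exact ⟨fun x => by
      rw [hsingleton, h.continuousWithinAt.leftLim_eq, sub_self, ENNReal.ofReal_zero]⟩
  · intro h
    refine continuous_iff_continuousAt.2 fun x => continuousAt_iff_continuous_left'_right'.2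
      ⟨?_, ((cdf μ).right_continuous x).mono Ioi_subset_Ici_self⟩
    have hjump := hsingleton x
    rw [measure_singleton, eq_comm, ENNReal.ofReal_eq_zero, sub_nonpos] at hjump
    exact (monotone_cdf μ).continuousWithinAt_Iio_iff_leftLim_eq.2
      (le_antisymm ((monotone_cdf μ).leftLim_le le_rfl) hjump)

theorem antitone_measureReal_Ici : Antitone fun x => μ.real (Ici x) :=
  fun _ _ h => measureReal_mono (Ici_subset_Ici.2 h)

variable [NullSingletonClass μ]

theorem measureReal_Ici_eq_one_sub_cdf (x : ℝ) : μ.real (Ici x) = 1 - cdf μ x := by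
  rw [← measureReal_congr Ioi_ae_eq_Ici, ← compl_Iic, probReal_compl_eq_one_sub measurableSet_Iic,
    cdf_eq_real]

theorem continuous_measureReal_Ici : Continuous fun x => μ.real (Ici x) := by
  simp_rw [measureReal_Ici_eq_one_sub_cdf]
  exact continuous_const.sub (continuous_cdf_iff.2 ‹_›)

theorem measure_setOf_measureReal_Ici_le (t : ℝ) :
    μ {x | μ.real (Ici x) ≤ t} = ENNReal.ofReal (min t 1) := by
  rcases le_or_gt 1 t with ht | ht
  · have huniv : {x | μ.real (Ici x) ≤ t} = univ :=
      eq_univ_of_forall fun _ => measureReal_le_one.trans ht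
    simp [huniv, ht]
  rw [min_eq_left ht.le]
  rcases eq_empty_or_nonempty {x | μ.real (Ici x) ≤ t} with hempty | hne
  · have ht0 : t ≤ 0 := by
      by_contra! ht0
      have htop : Tendsto (fun x => μ.real (Ici x)) atTop (𝓝 0) := by
        simpa [measureReal_Ici_eq_one_sub_cdf] using (tendsto_cdf_atTop μ).const_sub 1
      obtain ⟨x, hx⟩ := (htop.eventually_lt_const ht0).exists
      exact hempty.subset hx.le
    rw [hempty, measure_empty, ENNReal.ofReal_of_nonpos ht0]
  · have hbot : Tendsto (fun x => μ.real (Ici x)) atBot (𝓝 1) := by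
      simpa [measureReal_Ici_eq_one_sub_cdf] using (tendsto_cdf_atBot μ).const_sub 1
    obtain ⟨b, hray, hb⟩ := antitone_measureReal_Ici.exists_setOf_le_eq_Ici
      continuous_measureReal_Ici hne (hbot.eventually_const_lt ht).exists
    rw [hray, ← hb, ofReal_measureReal]

theorem map_measureReal_Ici : μ.map (fun x => μ.real (Ici x)) = volume.restrict (Icc 0 1) := by
  have hmeas : Measurable fun x => μ.real (Ici x) := antitone_measureReal_Ici.measurable
  have : IsProbabilityMeasure (μ.map fun x => μ.real (Ici x)) :=
    Measure.isProbabilityMeasure_map hmeas.aemeasurable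
  refine Measure.ext_of_Iic _ _ fun t => ?_
  rw [Measure.map_apply hmeas measurableSet_Iic, Real.volume_restrict_Icc_Iic, sub_zero]
  exact measure_setOf_measureReal_Ici_le t

end ProbabilityTheory

theorem truncated_cdf_transform_uniform_general
    {Ω : Type*} [MeasurableSpace Ω] (P : Measure Ω) [IsProbabilityMeasure P]
    (X : Ω → ℝ) (hX : Measurable X)
    (hCont : Continuous (fun x : ℝ => (P (X ⁻¹' Set.Iic x)).toReal))
    (M : Set ℝ) (hM : MeasurableSet M) (hpos : 0 < P (X ⁻¹' M)) :
    Measure.map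
        (fun ω => ((P {ω' | X ω' ∈ M ∧ X ω ≤ X ω'}) / (P (X ⁻¹' M))).toReal)
        (P[|X ⁻¹' M])
      = volume.restrict (Set.Icc (0 : ℝ) 1) := by
  set ν := (P.map X)[|M]
  have : IsProbabilityMeasure (P.map X) := Measure.isProbabilityMeasure_map hX.aemeasurable
  have : IsProbabilityMeasure ν :=
    cond_isProbabilityMeasure (by rw [Measure.map_apply hX hM]; exact hpos.ne')
  have : NullSingletonClass (P.map X) := by
    refine continuous_cdf_iff.1 ?_
    convert hCont using 2 with x
    rw [cdf_eq_real, measureReal_def, Measure.map_apply hX measurableSet_Iic]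
  have hstat : (fun ω => ((P {ω' | X ω' ∈ M ∧ X ω ≤ X ω'}) / (P (X ⁻¹' M))).toReal)
      = (fun x => ν.real (Ici x)) ∘ X := by
    ext ω
    rw [Function.comp_apply, measureReal_def, cond_apply hM, Measure.map_apply hX hM,
      Measure.map_apply hX (hM.inter measurableSet_Ici), div_eq_mul_inv, mul_comm]
    rfl
  rw [hstat, ← Measure.map_map antitone_measureReal_Ici.measurable hX, map_cond_preimage hX hM,
    map_measureReal_Ici]

theorem truncated_cdf_transform_uniform
    {Ω : Type*} [MeasurableSpace Ω] (P : Measure Ω) [IsProbabilityMeasure P]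
    (X : Ω → ℝ) (hX : Measurable X)
    (hCont : Continuous (fun x : ℝ => (P (X ⁻¹' Set.Iic x)).toReal))
    (hMono : StrictMono (fun x : ℝ => (P (X ⁻¹' Set.Iic x)).toReal))
    (M : Set ℝ) (hM : MeasurableSet M) (hpos : 0 < P (X ⁻¹' M)) :
    Measure.map
        (fun ω => ((P {ω' | X ω' ∈ M ∧ X ω ≤ X ω'}) / (P (X ⁻¹' M))).toReal)
        (P[|X ⁻¹' M])
      = volume.restrict (Set.Icc (0 : ℝ) 1) :=
  truncated_cdf_transform_uniform_general P X hX hCont M hM hpos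
end

section
/- Let Z₁, ..., Z_p be i.i.d. standard normal variables and let λ₁ ≥ λ₂ be the two largest values of |Z₁|, ..., |Z_p|. Then the statistic Φ̄(λ₁)/Φ̄(λ₂) is uniformly distributed on [0,1], where Φ̄ is the standard normal survival function. -/
open Real Filter MeasureTheory ProbabilityTheory

/-- Standard normal density. -/
noncomputable def stdNormalPdf (t : ℝ) : ℝ := (Real.sqrt (2 * Real.pi))⁻¹ * Real.exp (-t ^ 2 / 2)

/-- Standard normal survival function. -/
noncomputable def stdNormalSurv (t : ℝ) : ℝ := ∫ u in Set.Ioi t, stdNormalPdf u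

/-!
The two-sided p-value `W = 2 Φ̄(|Z|)` of a standard normal `Z` is uniform on `[0, 1]` and
decreasing in `|Z|`, so the statistic is `W₍₁₎ / W₍₂₎`, the ratio of the two smallest of `p`
i.i.d. uniforms. For `0 < x < 1`, the event `W₍₁₎ / W₍₂₎ ≤ x` is the disjoint union over `i` of
`{W_i ≤ x · min_{j ≠ i} W_j}`, and integrating out `W_i` shows that each of these events has
probability `x` times that of `{W_i ≤ min_{j ≠ i} W_j}`. Hence `P(W₍₁₎ / W₍₂₎ ≤ x) = c x`, where
`c ≥ 1` because the events at `x = 1` cover everything, and `c ≤ 1` because `c x ≤ 1` for all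
`x < 1`.
-/

open Set Topology

local notation "𝒰" => volume.restrict (Icc (0:ℝ) 1)

lemma stdNormalPdf_pos (t : ℝ) : 0 < stdNormalPdf t := by
  unfold stdNormalPdf; positivity

lemma continuous_stdNormalPdf : Continuous stdNormalPdf := by
  unfold stdNormalPdf; fun_prop

lemma gaussianPDFReal_zero_one : gaussianPDFReal 0 1 = stdNormalPdf := by
  ext t; simp [gaussianPDFReal, stdNormalPdf]

lemma integrable_stdNormalPdf : Integrable stdNormalPdf :=
  gaussianPDFReal_zero_one ▸ integrable_gaussianPDFReal 0 1

lemma stdNormalPdf_neg (t : ℝ) : stdNormalPdf (-t) = stdNormalPdf t := by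
  simp [stdNormalPdf]

lemma gaussianReal_zero_one_apply (s : Set ℝ) :
    gaussianReal 0 1 s = ENNReal.ofReal (∫ u in s, stdNormalPdf u) := by
  rw [gaussianReal_apply_eq_integral 0 one_ne_zero, gaussianPDFReal_zero_one]

lemma gaussianReal_zero_one_Ici (t : ℝ) :
    gaussianReal 0 1 (Ici t) = ENNReal.ofReal (stdNormalSurv t) := by
  rw [gaussianReal_zero_one_apply, integral_Ici_eq_integral_Ioi, stdNormalSurv]

lemma gaussianReal_zero_one_Iic_neg (t : ℝ) :
    gaussianReal 0 1 (Iic (-t)) = ENNReal.ofReal (stdNormalSurv t) := by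
  simp_rw [gaussianReal_zero_one_apply, ← integral_comp_neg_Ioi, stdNormalPdf_neg, stdNormalSurv]

lemma stdNormalSurv_sub_stdNormalSurv (a b : ℝ) :
    stdNormalSurv a - stdNormalSurv b = ∫ u in a..b, stdNormalPdf u :=
  intervalIntegral.integral_Ioi_sub_Ioi' integrable_stdNormalPdf.integrableOn
    integrable_stdNormalPdf.integrableOn

lemma hasDerivAt_stdNormalSurv (t : ℝ) : HasDerivAt stdNormalSurv (-stdNormalPdf t) t := by
  have h : stdNormalSurv = fun t => stdNormalSurv 0 - ∫ u in (0:ℝ)..t, stdNormalPdf u := by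
    ext t; rw [← stdNormalSurv_sub_stdNormalSurv]; ring
  rw [h]
  exact (continuous_stdNormalPdf.integral_hasStrictDerivAt 0 t).hasDerivAt.const_sub _

lemma continuous_stdNormalSurv : Continuous stdNormalSurv :=
  continuous_iff_continuousAt.2 fun t => (hasDerivAt_stdNormalSurv t).continuousAt

lemma stdNormalSurv_strictAnti : StrictAnti stdNormalSurv :=
  strictAnti_of_deriv_neg fun t => by
    rw [(hasDerivAt_stdNormalSurv t).deriv, neg_lt_zero]; exact stdNormalPdf_pos t

lemma stdNormalSurv_zero : stdNormalSurv 0 = 1 / 2 := by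
  have h := integral_gaussian_Ioi (1 / 2)
  simp only [stdNormalSurv, stdNormalPdf, integral_const_mul]
  have : π / (1 / 2) = 2 * π := by ring
  simp_rw [show ∀ u : ℝ, -u ^ 2 / 2 = -(1 / 2) * u ^ 2 from fun u => by ring, h, this]
  field_simp

lemma tendsto_stdNormalSurv_atTop : Tendsto stdNormalSurv atTop (𝓝 0) := by
  have h := intervalIntegral_tendsto_integral_Ioi 0 integrable_stdNormalPdf.integrableOn tendsto_id
  rw [← sub_self (stdNormalSurv 0)]
  exact (h.const_sub (stdNormalSurv 0)).congr fun t => by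
    simp [← stdNormalSurv_sub_stdNormalSurv, stdNormalSurv]

instance isProbabilityMeasure_restrict_Icc_zero_one : IsProbabilityMeasure 𝒰 := ⟨by simp⟩

lemma restrict_Icc_Iic (x : ℝ) : 𝒰 (Iic x) = ENNReal.ofReal (min x 1) := by
  have h : Iic x ∩ Icc 0 1 = Icc 0 (min x 1) := by
    ext t; simp only [mem_inter_iff, mem_Iic, mem_Icc, le_min_iff]; tauto
  rw [Measure.restrict_apply measurableSet_Iic, h, Real.volume_Icc, sub_zero]

lemma ae_restrict_Icc_pos : ∀ᵐ t ∂𝒰, 0 < t := by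
  rw [← Measure.restrict_congr_set Ioc_ae_eq_Icc]
  exact (ae_restrict_mem measurableSet_Ioc).mono fun t ht => ht.1

lemma eq_restrict_Icc_of_Iic {μ : Measure ℝ} [IsProbabilityMeasure μ]
    (h : ∀ x ∈ Ioo (0:ℝ) 1, μ (Iic x) = ENNReal.ofReal x) : μ = 𝒰 := by
  have hlim (a : ℝ) (l : Filter ℝ) (hl : l ≤ 𝓝 a) :
      Tendsto ENNReal.ofReal l (𝓝 (ENNReal.ofReal a)) :=
    (ENNReal.continuous_ofReal.tendsto a).mono_left hl
  refine Measure.ext_of_Iic _ _ fun x => ?_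
  rw [restrict_Icc_Iic]
  rcases le_or_gt x 0 with hx | hx
  · have h0 : μ (Iic x) ≤ ENNReal.ofReal 0 :=
      ge_of_tendsto (hlim 0 _ nhdsWithin_le_nhds)
        (Filter.mem_of_superset (Ioo_mem_nhdsGT zero_lt_one) fun y hy =>
          (measure_mono (Iic_subset_Iic.2 (hx.trans hy.1.le))).trans (h y hy).le)
    rw [ENNReal.ofReal_of_nonpos (min_le_of_left_le hx)]
    simpa using h0
  rcases lt_or_ge x 1 with hx1 | hx1
  · rw [min_eq_left hx1.le, h x ⟨hx, hx1⟩]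
  rw [min_eq_right hx1, ENNReal.ofReal_one]
  refine le_antisymm prob_le_one ?_
  rw [← ENNReal.ofReal_one]
  refine le_of_tendsto (hlim 1 _ nhdsWithin_le_nhds)
    (Filter.mem_of_superset (Ioo_mem_nhdsLT zero_lt_one) fun y hy => ?_)
  exact (h y hy).symm.le.trans (measure_mono (Iic_subset_Iic.2 (hy.2.le.trans hx1)))

noncomputable def twoSidedPValue (t : ℝ) : ℝ := 2 * stdNormalSurv |t|

lemma measurable_twoSidedPValue : Measurable twoSidedPValue :=
  (continuous_const.mul (continuous_stdNormalSurv.comp continuous_abs)).measurable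

lemma map_twoSidedPValue_gaussianReal : (gaussianReal 0 1).map twoSidedPValue = 𝒰 := by
  have hmeas := measurable_twoSidedPValue
  have := Measure.isProbabilityMeasure_map (μ := gaussianReal 0 1) hmeas.aemeasurable
  refine eq_restrict_Icc_of_Iic fun x hx => ?_
  obtain ⟨a, ha⟩ : x / 2 ∈ range stdNormalSurv :=
    mem_range_of_exists_le_of_exists_ge continuous_stdNormalSurv
      ((tendsto_stdNormalSurv_atTop.eventually (gt_mem_nhds (half_pos hx.1))).exists.imp
        fun _ => le_of_lt)
      ⟨0, by rw [stdNormalSurv_zero]; linarith [hx.2]⟩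
  have ha0 : 0 < a :=
    stdNormalSurv_strictAnti.lt_iff_gt.1 (by rw [ha, stdNormalSurv_zero]; linarith [hx.2])
  have hpre : twoSidedPValue ⁻¹' Iic x = Iic (-a) ∪ Ici a := by
    ext t
    have := stdNormalSurv_strictAnti.le_iff_ge (a := |t|) (b := a)
    simp only [twoSidedPValue, mem_preimage, mem_Iic, mem_union, mem_Ici, ← le_abs', ← this, ha]
    constructor <;> intro <;> linarith
  have hdisj : Disjoint (Iic (-a)) (Ici a) := Iic_disjoint_Ici.2 (by linarith)
  rw [Measure.map_apply hmeas measurableSet_Iic, hpre, measure_union hdisj measurableSet_Ici,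
    gaussianReal_zero_one_Iic_neg, gaussianReal_zero_one_Ici, ← ENNReal.ofReal_add, ha]
  · ring_nf
  all_goals linarith [hx.1]

lemma lt_ciInf_of_finite {κ α : Type*} [Finite κ] [Nonempty κ] [ConditionallyCompleteLinearOrder α]
    {f : κ → α} {a : α} (hf : ∀ k, a < f k) : a < ⨅ k, f k := by
  obtain ⟨k, hk⟩ := exists_eq_ciInf_of_finite (f := f)
  exact hk ▸ hf k

section OrderStatistics

variable {ι : Type*} [Fintype ι]

noncomputable def secondMin (s : ι → ℝ) : ℝ :=
  ⨅ q : {q : ι × ι // q.1 ≠ q.2}, max (s q.1.1) (s q.1.2)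

instance nonempty_ne_of_nontrivial [Nontrivial ι] (i : ι) : Nonempty {j // j ≠ i} :=
  nonempty_subtype.2 (exists_ne i)

instance nonempty_pair_ne_of_nontrivial [Nontrivial ι] : Nonempty {q : ι × ι // q.1 ≠ q.2} :=
  let ⟨a, b, hab⟩ := exists_pair_ne ι
  ⟨⟨(a, b), hab⟩⟩

lemma secondMin_eq_iInf_ne [Nontrivial ι] {s : ι → ℝ} {i : ι} (hi : ∀ j, s i ≤ s j) :
    secondMin s = ⨅ j : {j // j ≠ i}, s j := by
  apply le_antisymm
  · refine le_ciInf fun j => ?_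
    calc secondMin s ≤ max (s j) (s i) :=
        ciInf_le (Finite.bddBelow_range _) (⟨(j, i), j.2⟩ : {q : ι × ι // q.1 ≠ q.2})
      _ = s j := max_eq_left (hi j)
  · refine le_ciInf fun q => ?_
    by_cases h : q.1.1 = i
    · exact (ciInf_le (Finite.bddBelow_range _) ⟨q.1.2, fun h' => q.2 (h.trans h'.symm)⟩).trans
        (le_max_right _ _)
    · exact (ciInf_le (Finite.bddBelow_range _) ⟨q.1.1, h⟩).trans (le_max_left _ _)

lemma exists_le_iInf_ne [Nontrivial ι] (s : ι → ℝ) : ∃ i, s i ≤ ⨅ j : {j // j ≠ i}, s j := by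
  obtain ⟨i, hi⟩ := exists_eq_ciInf_of_finite (f := s)
  exact ⟨i, le_ciInf fun j => by rw [hi]; exact ciInf_le (Finite.bddBelow_range s) _⟩

lemma lt_of_le_mul_iInf_ne {s : ι → ℝ} (hs : ∀ k, 0 < s k) {x : ℝ} (hx : x < 1) {i j : ι}
    (hji : j ≠ i) (hi : s i ≤ x * ⨅ k : {k // k ≠ i}, s k) : s i < s j := by
  have : Nonempty {k // k ≠ i} := ⟨⟨j, hji⟩⟩
  calc s i ≤ x * ⨅ k : {k // k ≠ i}, s k := hi
    _ < ⨅ k : {k // k ≠ i}, s k := mul_lt_of_lt_one_left (lt_ciInf_of_finite fun k => hs k) hx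
    _ ≤ s j := ciInf_le (Finite.bddBelow_range _) (⟨j, hji⟩ : {k // k ≠ i})

lemma iInf_div_secondMin_le_iff [Nontrivial ι] {s : ι → ℝ} (hs : ∀ i, 0 < s i) {x : ℝ}
    (hx : x < 1) :
    (⨅ i, s i) / secondMin s ≤ x ↔ ∃ i, s i ≤ x * ⨅ j : {j // j ≠ i}, s j := by
  have hval {i : ι} (hi : ∀ j, s i ≤ s j) :
      (⨅ i, s i) / secondMin s ≤ x ↔ s i ≤ x * ⨅ j : {j // j ≠ i}, s j := by
    rw [secondMin_eq_iInf_ne hi, le_antisymm (ciInf_le (Finite.bddBelow_range _) i) (le_ciInf hi),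
      div_le_iff₀ (lt_ciInf_of_finite (f := fun j : {j // j ≠ i} => s j) fun j => hs j)]
  constructor
  · obtain ⟨i, hi⟩ := exists_eq_ciInf_of_finite (f := s)
    exact fun h => ⟨i, (hval fun j => hi ▸ ciInf_le (Finite.bddBelow_range _) j).1 h⟩
  · rintro ⟨i, hi⟩
    refine (hval fun j => ?_).2 hi
    rcases eq_or_ne j i with rfl | hj
    exacts [le_rfl, (lt_of_le_mul_iInf_ne hs hx hj hi).le]

end OrderStatistics

lemma measurePreserving_eval_prod_restrict_ne {ι α : Type*} [Fintype ι] [DecidableEq ι]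
    [MeasurableSpace α] (μ : Measure α) [SigmaFinite μ] (i : ι) :
    MeasurePreserving (fun s : ι → α => (s i, fun j : {j // j ≠ i} => s j))
      (Measure.pi fun _ => μ) (μ.prod (Measure.pi fun _ : {j // j ≠ i} => μ)) := by
  let : Fintype {j // j = i} := Subtype.fintype _
  exact ((measurePreserving_piUnique fun _ : {j // j = i} => μ).prod (MeasurePreserving.id _)).comp
    (measurePreserving_piEquivPiSubtypeProd (fun _ => μ) (· = i))

lemma prod_setOf_le_mul {β : Type*} [MeasurableSpace β] (ν : Measure β) [SFinite ν]
    {M : β → ℝ} (hM : Measurable M) (hM1 : ∀ᵐ u ∂ν, M u ≤ 1) {x : ℝ} (hx0 : 0 ≤ x)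
    (hx1 : x ≤ 1) :
    Measure.prod 𝒰 ν {z | z.1 ≤ x * M z.2}
      = ENNReal.ofReal x * Measure.prod 𝒰 ν {z | z.1 ≤ M z.2} := by
  rw [Measure.prod_apply_symm (measurableSet_le (by fun_prop) (by fun_prop)),
    Measure.prod_apply_symm (measurableSet_le (by fun_prop) (by fun_prop)),
    ← lintegral_const_mul' _ _ ENNReal.ofReal_ne_top]
  refine lintegral_congr_ae (hM1.mono fun u hu => ?_)
  have hxM : x * M u ≤ 1 := by
    rcases le_total (M u) 0 with h | h <;> nlinarith
  change 𝒰 (Iic (x * M u)) = ENNReal.ofReal x * 𝒰 (Iic (M u))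
  rw [restrict_Icc_Iic, restrict_Icc_Iic, min_eq_left hu, min_eq_left hxM, ENNReal.ofReal_mul hx0]

lemma pi_setOf_le_mul_iInf_ne {ι : Type*} [Fintype ι] [Nontrivial ι] (i : ι) {x : ℝ}
    (hx0 : 0 ≤ x) (hx1 : x ≤ 1) :
    Measure.pi (fun _ : ι => 𝒰) {s | s i ≤ x * ⨅ j : {j // j ≠ i}, s j}
      = ENNReal.ofReal x * Measure.pi (fun _ : ι => 𝒰) {s | s i ≤ ⨅ j : {j // j ≠ i}, s j} := by
  classical
  obtain ⟨j₀⟩ := nonempty_ne_of_nontrivial i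
  have hM : ∀ᵐ u ∂Measure.pi (fun _ : {j // j ≠ i} => 𝒰), ⨅ j, u j ≤ 1 :=
    (Measure.tendsto_eval_ae_ae (i := j₀)).eventually (ae_restrict_mem measurableSet_Icc)
      |>.mono fun u hu => (ciInf_le (Finite.bddBelow_range _) j₀).trans hu.2
  have e := measurePreserving_eval_prod_restrict_ne 𝒰 i
  calc _ = Measure.prod 𝒰 (Measure.pi fun _ : {j // j ≠ i} => 𝒰) {z | z.1 ≤ x * ⨅ j, z.2 j} :=
        e.measure_preimage (measurableSet_le (by fun_prop) (by fun_prop)).nullMeasurableSet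
    _ = ENNReal.ofReal x *
          Measure.prod 𝒰 (Measure.pi fun _ : {j // j ≠ i} => 𝒰) {z | z.1 ≤ ⨅ j, z.2 j} :=
        prod_setOf_le_mul _ (by fun_prop) hM hx0 hx1
    _ = _ := congrArg _
      (e.measure_preimage (measurableSet_le (by fun_prop) (by fun_prop)).nullMeasurableSet).symm

lemma measurable_iInf_div_secondMin {ι : Type*} [Fintype ι] :
    Measurable fun s : ι → ℝ => (⨅ i, s i) / secondMin s := by
  unfold secondMin; fun_prop

lemma pi_setOf_iInf_div_secondMin_le {ι : Type*} [Fintype ι] [Nontrivial ι] {x : ℝ}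
    (hx : x ∈ Ioo (0:ℝ) 1) :
    Measure.pi (fun _ : ι => 𝒰) {s | (⨅ i, s i) / secondMin s ≤ x}
      = ENNReal.ofReal x *
          ∑ i, Measure.pi (fun _ : ι => 𝒰) {s | s i ≤ ⨅ j : {j // j ≠ i}, s j} := by
  set ν := Measure.pi fun _ : ι => 𝒰
  set B : ι → Set (ι → ℝ) := fun i => {s | s i ≤ x * ⨅ j : {j // j ≠ i}, s j}
  have hpos : ∀ᵐ s ∂ν, ∀ i, 0 < s i :=
    ae_all_iff.2 fun i => Measure.tendsto_eval_ae_ae.eventually ae_restrict_Icc_pos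
  have hunion : {s | (⨅ i, s i) / secondMin s ≤ x} =ᵐ[ν] ⋃ i, B i :=
    eventuallyEq_set.2 <| hpos.mono fun s hs => by
      simpa [B] using iInf_div_secondMin_le_iff hs hx.2
  have hdisj : Pairwise fun i j => AEDisjoint ν (B i) (B j) := fun i j hij => measure_mono_null
    (fun s hs hs' => (lt_of_le_mul_iInf_ne hs' hx.2 hij.symm hs.1).not_gt
      (lt_of_le_mul_iInf_ne hs' hx.2 hij hs.2)) (ae_iff.1 hpos)
  rw [measure_congr hunion, measure_iUnion₀ hdisj
      fun i => (measurableSet_le (by fun_prop) (by fun_prop)).nullMeasurableSet,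
    tsum_fintype, Finset.mul_sum]
  exact Finset.sum_congr rfl fun i _ => pi_setOf_le_mul_iInf_ne i hx.1.le hx.2.le

theorem map_iInf_div_secondMin_pi {ι : Type*} [Fintype ι] [Nontrivial ι] :
    (Measure.pi fun _ : ι => 𝒰).map (fun s => (⨅ i, s i) / secondMin s) = 𝒰 := by
  set ν := Measure.pi fun _ : ι => 𝒰
  set c := ∑ i, ν {s | s i ≤ ⨅ j : {j // j ≠ i}, s j}
  have hcover : ⋃ i, {s : ι → ℝ | s i ≤ ⨅ j : {j // j ≠ i}, s j} = univ :=
    iUnion_eq_univ_iff.2 exists_le_iInf_ne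
  have hc_ge : 1 ≤ c :=
    calc 1 = ν (⋃ i, {s | s i ≤ ⨅ j : {j // j ≠ i}, s j}) := by rw [hcover, measure_univ]
      _ ≤ c := measure_iUnion_fintype_le _ _
  have hc_le : c ≤ 1 := by
    have hlim : Tendsto (fun x => ENNReal.ofReal x * c) (𝓝[<] 1) (𝓝 (ENNReal.ofReal 1 * c)) :=
      ENNReal.Tendsto.mul_const ((ENNReal.continuous_ofReal.tendsto 1).mono_left
        nhdsWithin_le_nhds) (Or.inl (by simp))
    simpa using le_of_tendsto hlim (Filter.mem_of_superset (Ioo_mem_nhdsLT zero_lt_one)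
      fun x hx => (pi_setOf_iInf_div_secondMin_le hx).symm.le.trans prob_le_one)
  have hF := measurable_iInf_div_secondMin (ι := ι)
  have := Measure.isProbabilityMeasure_map (μ := ν) hF.aemeasurable
  refine eq_restrict_Icc_of_Iic fun x hx => ?_
  rw [Measure.map_apply hF measurableSet_Iic, ← mul_one (ENNReal.ofReal x),
    ← le_antisymm hc_le hc_ge]
  exact pi_setOf_iInf_div_secondMin_le hx

lemma stdNormalSurv_iSup_abs_div {ι : Type*} [Fintype ι] [Nontrivial ι] (a : ι → ℝ) :
    stdNormalSurv (⨆ i, |a i|)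
        / stdNormalSurv (⨆ q : {q : ι × ι // q.1 ≠ q.2}, min |a q.1.1| |a q.1.2|)
      = (⨅ i, twoSidedPValue (a i)) / secondMin fun i => twoSidedPValue (a i) := by
  set g := fun t => 2 * stdNormalSurv t
  have hanti : Antitone g := fun _ _ h =>
    mul_le_mul_of_nonneg_left (stdNormalSurv_strictAnti.antitone h) zero_le_two
  have hcont : Continuous g := continuous_const.mul continuous_stdNormalSurv
  have hmin : ⨅ i, twoSidedPValue (a i) = g (⨆ i, |a i|) :=
    (hanti.map_ciSup_of_continuousAt hcont.continuousAt (Finite.bddAbove_range _)).symm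
  have hsecond : secondMin (fun i => twoSidedPValue (a i))
      = g (⨆ q : {q : ι × ι // q.1 ≠ q.2}, min |a q.1.1| |a q.1.2|) := by
    rw [hanti.map_ciSup_of_continuousAt hcont.continuousAt (Finite.bddAbove_range _)]
    simp only [secondMin, twoSidedPValue, g, hanti.map_min]
  rw [hmin, hsecond, mul_div_mul_left _ _ two_ne_zero]

theorem tchi_first_step_uniform_general
    {Ω : Type*} [MeasurableSpace Ω] (P : Measure Ω)
    (p : ℕ) (hp : 2 ≤ p) (Z : Fin p → Ω → ℝ)
    (hmeas : ∀ i, Measurable (Z i))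
    (hgauss : ∀ i, Measure.map (Z i) P = gaussianReal 0 1)
    (hindep : iIndepFun Z P)
    (l₁ l₂ : Ω → ℝ)
    (hl₁ : l₁ = fun ω => ⨆ i : Fin p, |Z i ω|)
    (hl₂ : l₂ = fun ω => ⨆ q : {q : Fin p × Fin p // q.1 ≠ q.2}, min |Z q.1.1 ω| |Z q.1.2 ω|) :
    Measure.map (fun ω => stdNormalSurv (l₁ ω) / stdNormalSurv (l₂ ω)) P
      = volume.restrict (Set.Icc (0 : ℝ) 1) := by
  have : Nontrivial (Fin p) := Fin.nontrivial_iff_two_le.2 hp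
  have hW : Measurable fun ω i => twoSidedPValue (Z i ω) :=
    measurable_pi_lambda _ fun i => measurable_twoSidedPValue.comp (hmeas i)
  have hlaw : P.map (fun ω i => twoSidedPValue (Z i ω)) = Measure.pi fun _ => 𝒰 := by
    refine ((hindep.comp _ fun _ => measurable_twoSidedPValue).map_fun_eq_pi_map
      fun i => (measurable_twoSidedPValue.comp (hmeas i)).aemeasurable).trans ?_
    congr with i : 1
    rw [← Measure.map_map measurable_twoSidedPValue (hmeas i), hgauss i,
      map_twoSidedPValue_gaussianReal]
  have hstat : (fun ω => stdNormalSurv (l₁ ω) / stdNormalSurv (l₂ ω))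
      = (fun s => (⨅ i, s i) / secondMin s) ∘ fun ω i => twoSidedPValue (Z i ω) := by
    subst hl₁ hl₂
    exact funext fun ω => stdNormalSurv_iSup_abs_div fun i => Z i ω
  rw [hstat, ← Measure.map_map measurable_iInf_div_secondMin hW, hlaw, map_iInf_div_secondMin_pi]

theorem tchi_first_step_uniform
    {Ω : Type*} [MeasurableSpace Ω] (P : Measure Ω) [IsProbabilityMeasure P]
    (p : ℕ) (hp : 2 ≤ p) (Z : Fin p → Ω → ℝ)
    (hmeas : ∀ i, Measurable (Z i))
    (hgauss : ∀ i, Measure.map (Z i) P = gaussianReal 0 1)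
    (hindep : iIndepFun Z P)
    (l₁ l₂ : Ω → ℝ)
    (hl₁ : l₁ = fun ω => ⨆ i : Fin p, |Z i ω|)
    (hl₂ : l₂ = fun ω => ⨆ q : {q : Fin p × Fin p // q.1 ≠ q.2}, min |Z q.1.1 ω| |Z q.1.2 ω|) :
    Measure.map (fun ω => stdNormalSurv (l₁ ω) / stdNormalSurv (l₂ ω)) P
      = volume.restrict (Set.Icc (0 : ℝ) 1) :=
  tchi_first_step_uniform_general P p hp Z hmeas hgauss hindep l₁ l₂ hl₁ hl₂
end
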